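/- Let Φ_a : ℝ^{2×K×J} → ℝ^{2×K×J} be the fixed-point map of Scheme 1 with data a, r_a = ‖a‖, and set ρ = √(2+√5). If the quantity C_x² + C_y² (where C_x = Δt/(4Δx√(ΔxΔy)), C_y = Δt/(4Δy√(ΔxΔy))) satisfies C_x² + C_y² ≤ (√5 − 2)/(200 r_a²), then Φ_a maps the closed ball Ω_a = {v : ‖v‖ ≤ ρ r_a} into itself and is a contraction on Ω_a, hence Scheme 1 has a unique solution in Ω_a. -/

import Mathlib

open Finset

noncomputable section

/-- Periodic centered first difference in the k (x) direction. -/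
def Dx (K J : ℕ) (Δx : ℝ) (f : ZMod K × ZMod J → ℝ) : ZMod K × ZMod J → ℝ :=
  fun p => (f (p.1 + 1, p.2) - f (p.1 - 1, p.2)) / (2 * Δx)

/-- Periodic centered first difference in the j (y) direction. -/
def Dy (K J : ℕ) (Δy : ℝ) (f : ZMod K × ZMod J → ℝ) : ZMod K × ZMod J → ℝ :=
  fun p => (f (p.1, p.2 + 1) - f (p.1, p.2 - 1)) / (2 * Δy)

/-- Periodic discrete Laplacian. -/
def discLap (K J : ℕ) (Δx Δy : ℝ) (f : ZMod K × ZMod J → ℝ) :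
    ZMod K × ZMod J → ℝ :=
  fun p =>
    (f (p.1 + 1, p.2) - 2 * f p + f (p.1 - 1, p.2)) / Δx ^ 2 +
    (f (p.1, p.2 + 1) - 2 * f p + f (p.1, p.2 - 1)) / Δy ^ 2

/-- The discrete Helmholtz operator Q = I − α²D². -/
def Qop (K J : ℕ) (α Δx Δy : ℝ) (f : ZMod K × ZMod J → ℝ) :
    ZMod K × ZMod J → ℝ :=
  fun p => f p - α ^ 2 * discLap K J Δx Δy f p

/-- Inverse of the discrete Helmholtz operator. -/
def Qinv (K J : ℕ) (α Δx Δy : ℝ) (f : ZMod K × ZMod J → ℝ) :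
    ZMod K × ZMod J → ℝ :=
  Function.invFun (Qop K J α Δx Δy) f

/-- Norm of a grid vector field (an element of ℝ^{2×K×J}). -/
def pairNorm (K J : ℕ) [NeZero K] [NeZero J] (Δx Δy : ℝ)
    (v : (ZMod K × ZMod J → ℝ) × (ZMod K × ZMod J → ℝ)) : ℝ :=
  Real.sqrt (∑ p : ZMod K × ZMod J, ((v.1 p) ^ 2 + (v.2 p) ^ 2) * Δx * Δy)

/-- The fixed-point map Φ_a of Scheme 1 with data a = M^{(n)}: a fixed point of
    `Phi K J α Δx Δy Δt a` is the new momentum M^{(n+1)}. -/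
def Phi (K J : ℕ) (α Δx Δy Δt : ℝ)
    (a v : (ZMod K × ZMod J → ℝ) × (ZMod K × ZMod J → ℝ)) :
    (ZMod K × ZMod J → ℝ) × (ZMod K × ZMod J → ℝ) :=
  let Qi := Qinv K J α Δx Δy
  (fun p => a.1 p - Δt / 4 *
      (((a.1 p + v.1 p) * Dx K J Δx (fun q => Qi a.1 q + Qi v.1 q) p) +
       ((a.2 p + v.2 p) * Dx K J Δx (fun q => Qi a.2 q + Qi v.2 q) p) +
       Dx K J Δx (fun q => (a.1 q + v.1 q) * (Qi a.1 q + Qi v.1 q)) p +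
       Dy K J Δy (fun q => (a.1 q + v.1 q) * (Qi a.2 q + Qi v.2 q)) p),
   fun p => a.2 p - Δt / 4 *
      (((a.1 p + v.1 p) * Dy K J Δy (fun q => Qi a.1 q + Qi v.1 q) p) +
       ((a.2 p + v.2 p) * Dy K J Δy (fun q => Qi a.2 q + Qi v.2 q) p) +
       Dx K J Δx (fun q => (a.2 q + v.2 q) * (Qi a.1 q + Qi v.1 q)) p +
       Dy K J Δy (fun q => (a.2 q + v.2 q) * (Qi a.2 q + Qi v.2 q)) p))

/-!
In the unweighted ℓ² norm on grid functions, periodic shifts are isometries, so the centred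
differences `Dx`, `Dy` have norm at most `1/Δx`, `1/Δy`, and pointwise products satisfy
`‖f g‖ ≤ ‖f‖ ‖g‖`. Cauchy–Schwarz against shifted copies of `f` gives `⟨Δ f, f⟩ ≤ 0` for the
second differences, so `⟨Q f, f⟩ ≥ ‖f‖²`: `Q` is invertible and `Q⁻¹` is linear with norm at most `1`.
Consequently the convective term `advection m m'` of Scheme 1 is bilinear, with
`‖(Δt/4) advection m m'‖ ≤ 2 √(Cx² + Cy²) ‖m‖ ‖m'‖` in the weighted norm, and
`Φ_a(v) = a - (Δt/4) advection (a + v) (a + v)`.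
With `ε = √(Cx² + Cy²) r_a`, the ball of radius `ρ r_a` is mapped into itself as soon as
`1 + 2 ε (1 + ρ)² ≤ ρ`, and `Φ_a` is `4 ε (1 + ρ)`-Lipschitz on it; the smallness condition gives
both. Since the weighted norm is a Euclidean norm, the ball is complete and Banach's fixed-point
theorem applies.
-/

open WithLp

section L2
variable {ι : Type*} [Fintype ι]

theorem sq_norm_toLp (f : ι → ℝ) : ‖toLp 2 f‖ ^ 2 = ∑ i, f i ^ 2 :=
  EuclideanSpace.real_norm_sq_eq _

theorem norm_toLp_eq_sqrt (f : ι → ℝ) : ‖toLp 2 f‖ = √(∑ i, f i ^ 2) := by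
  rw [← sq_norm_toLp, Real.sqrt_sq (norm_nonneg _)]

theorem sum_mul_le_norm_mul_norm (f g : ι → ℝ) :
    ∑ i, f i * g i ≤ ‖toLp 2 f‖ * ‖toLp 2 g‖ := by
  simpa only [norm_toLp_eq_sqrt] using Real.sum_mul_le_sqrt_mul_sqrt Finset.univ f g

theorem norm_toLp_comp_perm (σ : Equiv.Perm ι) (f : ι → ℝ) :
    ‖toLp 2 (f ∘ σ)‖ = ‖toLp 2 f‖ := by
  simp only [norm_toLp_eq_sqrt, Function.comp_apply, Equiv.sum_comp σ (fun i => f i ^ 2)]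

theorem norm_toLp_mul_le (f g : ι → ℝ) : ‖toLp 2 (f * g)‖ ≤ ‖toLp 2 f‖ * ‖toLp 2 g‖ := by
  rw [norm_toLp_eq_sqrt, norm_toLp_eq_sqrt, norm_toLp_eq_sqrt, ← Real.sqrt_mul
    (Finset.sum_nonneg fun i _ => sq_nonneg (f i)), Finset.sum_mul_sum]
  refine Real.sqrt_le_sqrt ?_
  calc ∑ i, (f * g) i ^ 2 = ∑ i, f i ^ 2 * g i ^ 2 := by simp only [Pi.mul_apply, mul_pow]
    _ ≤ ∑ i, ∑ j, f i ^ 2 * g j ^ 2 := Finset.sum_le_sum fun i _ =>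
        Finset.single_le_sum (f := fun j => f i ^ 2 * g j ^ 2)
          (fun j _ => by positivity) (Finset.mem_univ i)

theorem sum_comp_perm_mul_le (σ : Equiv.Perm ι) (f : ι → ℝ) :
    ∑ i, f (σ i) * f i ≤ ∑ i, f i ^ 2 := by
  calc ∑ i, f (σ i) * f i ≤ ‖toLp 2 (f ∘ σ)‖ * ‖toLp 2 f‖ := sum_mul_le_norm_mul_norm _ _
    _ = ∑ i, f i ^ 2 := by rw [norm_toLp_comp_perm, ← sq, sq_norm_toLp]

theorem sum_secondDiff_mul_self_nonpos (σ τ : Equiv.Perm ι) (f : ι → ℝ) :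
    ∑ i, (f (σ i) - 2 * f i + f (τ i)) * f i ≤ 0 := by
  have hσ := sum_comp_perm_mul_le σ f
  have hτ := sum_comp_perm_mul_le τ f
  have : ∑ i, (f (σ i) - 2 * f i + f (τ i)) * f i
      = ∑ i, f (σ i) * f i + ∑ i, f (τ i) * f i - 2 * ∑ i, f i ^ 2 := by
    rw [Finset.mul_sum, ← Finset.sum_add_distrib, ← Finset.sum_sub_distrib]
    exact Finset.sum_congr rfl fun i _ => by ring
  linarith

theorem norm_centralDiff_le (σ τ : Equiv.Perm ι) {h : ℝ} (hh : 0 < h) (f : ι → ℝ) :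
    ‖toLp 2 (fun i => (f (σ i) - f (τ i)) / (2 * h))‖ ≤ ‖toLp 2 f‖ / h := by
  have : toLp 2 (fun i => (f (σ i) - f (τ i)) / (2 * h))
      = (2 * h)⁻¹ • (toLp 2 (f ∘ σ) - toLp 2 (f ∘ τ)) := by
    ext i; simp [div_eq_inv_mul]
  rw [this, norm_smul, Real.norm_of_nonneg (by positivity)]
  calc (2 * h)⁻¹ * ‖toLp 2 (f ∘ σ) - toLp 2 (f ∘ τ)‖
      ≤ (2 * h)⁻¹ * (‖toLp 2 (f ∘ σ)‖ + ‖toLp 2 (f ∘ τ)‖) := by gcongr; exact norm_sub_le _ _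
    _ = ‖toLp 2 f‖ / h := by rw [norm_toLp_comp_perm, norm_toLp_comp_perm]; field_simp; ring

theorem norm_toLp_le_of_sum_sq_le_sum_mul {f g : ι → ℝ} (h : ∑ i, f i ^ 2 ≤ ∑ i, g i * f i) :
    ‖toLp 2 f‖ ≤ ‖toLp 2 g‖ := by
  have := (h.trans (sum_mul_le_norm_mul_norm g f))
  rw [← sq_norm_toLp, sq] at this
  rcases (norm_nonneg (toLp 2 f)).eq_or_lt with h0 | h0
  · rw [← h0]; exact norm_nonneg _
  · exact le_of_mul_le_mul_right this h0

variable (ι) in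
def pairL2 : ((ι → ℝ) × (ι → ℝ)) ≃ₗ[ℝ] WithLp 2 (EuclideanSpace ℝ ι × EuclideanSpace ℝ ι) :=
  ((EuclideanSpace.equiv ι ℝ).symm.toLinearEquiv.prodCongr
    (EuclideanSpace.equiv ι ℝ).symm.toLinearEquiv).trans
    (WithLp.linearEquiv 2 ℝ (EuclideanSpace ℝ ι × EuclideanSpace ℝ ι)).symm

theorem norm_pairL2 (v : (ι → ℝ) × (ι → ℝ)) :
    ‖pairL2 ι v‖ = √(‖toLp 2 v.1‖ ^ 2 + ‖toLp 2 v.2‖ ^ 2) :=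
  WithLp.prod_norm_eq_of_L2 _

end L2

theorem mul_add_mul_le_sqrt_mul_sqrt (a b c d : ℝ) :
    a * c + b * d ≤ √(a ^ 2 + b ^ 2) * √(c ^ 2 + d ^ 2) := by
  simpa [Fin.sum_univ_two] using Real.sum_mul_le_sqrt_mul_sqrt Finset.univ ![a, b] ![c, d]

theorem sqrt_sq_add_sq_le_of_bilinear_bound {a b x y x' y' p q : ℝ} (ha : 0 ≤ a) (hb : 0 ≤ b)
    (hx : 0 ≤ x) (hy : 0 ≤ y) (hx' : 0 ≤ x') (hy' : 0 ≤ y') (hp : 0 ≤ p) (hq : 0 ≤ q)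
    (hpb : p ≤ a * (x * x' + y * y') + x * (a * x' + b * y'))
    (hqb : q ≤ b * (x * x' + y * y') + y * (a * x' + b * y')) :
    √(p ^ 2 + q ^ 2) ≤ 2 * √(a ^ 2 + b ^ 2) * √(x ^ 2 + y ^ 2) * √(x' ^ 2 + y' ^ 2) := by
  set κ := √(a ^ 2 + b ^ 2)
  set U := √(x ^ 2 + y ^ 2)
  set U' := √(x' ^ 2 + y' ^ 2)
  set s := x * x' + y * y'
  set t := a * x' + b * y'
  have hs : s ≤ U * U' := mul_add_mul_le_sqrt_mul_sqrt x y x' y'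
  have ht : t ≤ κ * U' := mul_add_mul_le_sqrt_mul_sqrt a b x' y'
  have hcU : a * x + b * y ≤ κ * U := mul_add_mul_le_sqrt_mul_sqrt a b x y
  have hκ : κ ^ 2 = a ^ 2 + b ^ 2 := Real.sq_sqrt (by positivity)
  have hU : U ^ 2 = x ^ 2 + y ^ 2 := Real.sq_sqrt (by positivity)
  have hst : 0 ≤ s * t := by positivity
  -- `(p, q)` is dominated by `s • (a, b) + t • (x, y)`, whose length is at most `s κ + t U`.
  have key : p ^ 2 + q ^ 2 ≤ (s * κ + t * U) ^ 2 := calc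
    p ^ 2 + q ^ 2 ≤ (s * a + t * x) ^ 2 + (s * b + t * y) ^ 2 := by
      gcongr <;> linarith
    _ = s ^ 2 * κ ^ 2 + 2 * (s * t) * (a * x + b * y) + t ^ 2 * U ^ 2 := by rw [hκ, hU]; ring
    _ ≤ s ^ 2 * κ ^ 2 + 2 * (s * t) * (κ * U) + t ^ 2 * U ^ 2 := by gcongr
    _ = (s * κ + t * U) ^ 2 := by ring
  calc √(p ^ 2 + q ^ 2) ≤ s * κ + t * U := Real.sqrt_le_iff.2 ⟨by positivity, key⟩
    _ ≤ U * U' * κ + κ * U' * U := by gcongr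
    _ = 2 * κ * U * U' := by ring

theorem existsUnique_fixedPt_of_contracting_closedBall {E : Type*} [NormedAddCommGroup E]
    [CompleteSpace E]
    {F : E → E} {r L : ℝ} (hr : 0 ≤ r) (hL0 : 0 ≤ L) (hL : L < 1)
    (hmaps : ∀ x, ‖x‖ ≤ r → ‖F x‖ ≤ r)
    (hlip : ∀ x y, ‖x‖ ≤ r → ‖y‖ ≤ r → ‖F x - F y‖ ≤ L * ‖x - y‖) :
    ∃! x, ‖x‖ ≤ r ∧ F x = x := by
  have hmapsTo : Set.MapsTo F (Metric.closedBall 0 r) (Metric.closedBall 0 r) := fun x hx => by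
    simpa using hmaps x (by simpa using hx)
  have hcontr : ContractingWith ⟨L, hL0⟩ (hmapsTo.restrict F _ _) :=
    ⟨hL, LipschitzWith.of_dist_le_mul fun x y => by
      rw [Subtype.dist_eq, Subtype.dist_eq, dist_eq_norm, dist_eq_norm]
      exact hlip x y (mem_closedBall_zero_iff.1 x.2)
        (mem_closedBall_zero_iff.1 y.2)⟩
  obtain ⟨x, hx, hfx, -⟩ := hcontr.exists_fixedPoint' Metric.isClosed_closedBall.isComplete
    hmapsTo (Metric.mem_closedBall_self hr) (edist_ne_top _ _)
  rw [mem_closedBall_zero_iff] at hx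
  refine ⟨x, ⟨hx, hfx⟩, fun y ⟨hy, hfy⟩ => ?_⟩
  have h := hlip y x hy hx
  rw [hfy, hfx.eq] at h
  have : ‖y - x‖ = 0 := by nlinarith [norm_nonneg (y - x)]
  exact sub_eq_zero.1 (norm_eq_zero.1 this)

theorem AddEquiv.existsUnique_fixedPt {X E : Type*} [AddGroup X] [NormedAddCommGroup E]
    [CompleteSpace E] (e : X ≃+ E) {F : X → X} {r L : ℝ} (hr : 0 ≤ r) (hL0 : 0 ≤ L) (hL : L < 1)
    (hmaps : ∀ v, ‖e v‖ ≤ r → ‖e (F v)‖ ≤ r)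
    (hlip : ∀ v w, ‖e v‖ ≤ r → ‖e w‖ ≤ r → ‖e (F v - F w)‖ ≤ L * ‖e (v - w)‖) :
    ∃! v, ‖e v‖ ≤ r ∧ F v = v := by
  obtain ⟨y, ⟨hy, hfy⟩, huniq⟩ :=
    existsUnique_fixedPt_of_contracting_closedBall (F := e ∘ F ∘ e.symm) hr hL0 hL
      (fun x hx => hmaps _ (by simpa using hx))
      (fun x y hx hy => by
        simpa using hlip (e.symm x) (e.symm y) (by simpa using hx) (by simpa using hy))
  refine ⟨e.symm y, ⟨by simpa using hy, e.injective (by simpa using hfy)⟩, fun v ⟨hv, hfv⟩ => ?_⟩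
  rw [← huniq (e v) ⟨hv, by simp [hfv]⟩, e.symm_apply_apply]

section Grid
variable {K J : ℕ} [NeZero K] [NeZero J]

theorem norm_dx_le {Δx : ℝ} (hx : 0 < Δx) (f : ZMod K × ZMod J → ℝ) :
    ‖toLp 2 (Dx K J Δx f)‖ ≤ ‖toLp 2 f‖ / Δx :=
  norm_centralDiff_le ((Equiv.addRight 1).prodCongr (Equiv.refl _))
    ((Equiv.subRight 1).prodCongr (Equiv.refl _)) hx f

theorem norm_dy_le {Δy : ℝ} (hy : 0 < Δy) (f : ZMod K × ZMod J → ℝ) :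
    ‖toLp 2 (Dy K J Δy f)‖ ≤ ‖toLp 2 f‖ / Δy :=
  norm_centralDiff_le ((Equiv.refl _).prodCongr (Equiv.addRight 1))
    ((Equiv.refl _).prodCongr (Equiv.subRight 1)) hy f

variable (K J) in
def qopLinear (α Δx Δy : ℝ) : (ZMod K × ZMod J → ℝ) →ₗ[ℝ] (ZMod K × ZMod J → ℝ) where
  toFun := Qop K J α Δx Δy
  map_add' f g := by ext p; simp only [Qop, discLap, Pi.add_apply]; ring
  map_smul' c f := by
    ext p; simp only [Qop, discLap, Pi.smul_apply, smul_eq_mul, RingHom.id_apply]; ring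

theorem sum_sq_le_sum_qop_mul (α Δx Δy : ℝ) (f : ZMod K × ZMod J → ℝ) :
    ∑ p, f p ^ 2 ≤ ∑ p, Qop K J α Δx Δy f p * f p := by
  set Sx := ∑ p, (f (p.1 + 1, p.2) - 2 * f p + f (p.1 - 1, p.2)) * f p
  set Sy := ∑ p, (f (p.1, p.2 + 1) - 2 * f p + f (p.1, p.2 - 1)) * f p
  have hSx : Sx ≤ 0 := sum_secondDiff_mul_self_nonpos
    ((Equiv.addRight 1).prodCongr (Equiv.refl _)) ((Equiv.subRight 1).prodCongr (Equiv.refl _)) f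
  have hSy : Sy ≤ 0 := sum_secondDiff_mul_self_nonpos
    ((Equiv.refl _).prodCongr (Equiv.addRight 1)) ((Equiv.refl _).prodCongr (Equiv.subRight 1)) f
  have hQ : ∑ p, Qop K J α Δx Δy f p * f p =
      ∑ p, f p ^ 2 - α ^ 2 * (Sx / Δx ^ 2 + Sy / Δy ^ 2) := by
    simp only [Sx, Sy, Qop, discLap, Finset.sum_div, ← Finset.sum_add_distrib, Finset.mul_sum,
      ← Finset.sum_sub_distrib]
    exact Finset.sum_congr rfl fun p _ => by ring
  have : α ^ 2 * (Sx / Δx ^ 2 + Sy / Δy ^ 2) ≤ 0 := mul_nonpos_of_nonneg_of_nonpos (sq_nonneg α)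
    (add_nonpos (div_nonpos_of_nonpos_of_nonneg hSx (sq_nonneg _))
      (div_nonpos_of_nonpos_of_nonneg hSy (sq_nonneg _)))
  linarith

theorem norm_le_norm_qop (α Δx Δy : ℝ) (f : ZMod K × ZMod J → ℝ) :
    ‖toLp 2 f‖ ≤ ‖toLp 2 (Qop K J α Δx Δy f)‖ :=
  norm_toLp_le_of_sum_sq_le_sum_mul (sum_sq_le_sum_qop_mul α Δx Δy f)

theorem qopLinear_injective (α Δx Δy : ℝ) : Function.Injective (qopLinear K J α Δx Δy) := by
  refine (injective_iff_map_eq_zero _).2 fun f hf => ?_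
  have := norm_le_norm_qop α Δx Δy f
  rw [show Qop K J α Δx Δy f = 0 from hf, toLp_zero, norm_zero] at this
  simpa using le_antisymm this (norm_nonneg _)

variable (K J) in
def qopEquiv (α Δx Δy : ℝ) : (ZMod K × ZMod J → ℝ) ≃ₗ[ℝ] (ZMod K × ZMod J → ℝ) :=
  LinearEquiv.ofInjectiveEndo _ (qopLinear_injective α Δx Δy)

theorem qop_qinv (α Δx Δy : ℝ) (f : ZMod K × ZMod J → ℝ) :
    Qop K J α Δx Δy (Qinv K J α Δx Δy f) = f :=
  Function.invFun_eq ((qopEquiv K J α Δx Δy).surjective f)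

theorem qinv_eq_symm (α Δx Δy : ℝ) : Qinv K J α Δx Δy = (qopEquiv K J α Δx Δy).symm :=
  funext fun f => qopLinear_injective α Δx Δy
    ((qop_qinv α Δx Δy f).trans ((qopEquiv K J α Δx Δy).apply_symm_apply f).symm)

theorem norm_qinv_le (α Δx Δy : ℝ) (f : ZMod K × ZMod J → ℝ) :
    ‖toLp 2 (Qinv K J α Δx Δy f)‖ ≤ ‖toLp 2 f‖ := by
  simpa only [qop_qinv] using norm_le_norm_qop α Δx Δy (Qinv K J α Δx Δy f)

theorem pairNorm_eq {Δx Δy : ℝ} (h : 0 ≤ Δx * Δy)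
    (v : (ZMod K × ZMod J → ℝ) × (ZMod K × ZMod J → ℝ)) :
    pairNorm K J Δx Δy v = √(Δx * Δy) * ‖pairL2 _ v‖ := by
  rw [norm_pairL2, sq_norm_toLp, sq_norm_toLp, pairNorm, ← Real.sqrt_mul h, mul_add,
    Finset.mul_sum, Finset.mul_sum, ← Finset.sum_add_distrib]
  exact congrArg _ (Finset.sum_congr rfl fun p _ => by ring)

theorem pairNorm_nonneg (Δx Δy : ℝ) (v : (ZMod K × ZMod J → ℝ) × (ZMod K × ZMod J → ℝ)) :
    0 ≤ pairNorm K J Δx Δy v :=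
  Real.sqrt_nonneg _

theorem exists_linearEquiv_pairNorm_eq {Δx Δy : ℝ} (hx : 0 < Δx) (hy : 0 < Δy) :
    ∃ e : ((ZMod K × ZMod J → ℝ) × (ZMod K × ZMod J → ℝ)) ≃ₗ[ℝ]
        WithLp 2 (EuclideanSpace ℝ (ZMod K × ZMod J) × EuclideanSpace ℝ (ZMod K × ZMod J)),
      ∀ v, pairNorm K J Δx Δy v = ‖e v‖ := by
  have hΔ : 0 < √(Δx * Δy) := Real.sqrt_pos.2 (mul_pos hx hy)
  refine ⟨(pairL2 _).trans (LinearEquiv.smulOfNeZero ℝ _ _ hΔ.ne'), fun v => ?_⟩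
  simp [pairNorm_eq (mul_pos hx hy).le, norm_smul, abs_of_pos hΔ]

-- The convective term `(∇u)ᵀ m + ∇·(m ⊗ u)` of Scheme 1, with velocity `u = Q⁻¹ m'`.
variable (K J) in
def advection (α Δx Δy : ℝ) (m m' : (ZMod K × ZMod J → ℝ) × (ZMod K × ZMod J → ℝ)) :
    (ZMod K × ZMod J → ℝ) × (ZMod K × ZMod J → ℝ) :=
  (m.1 * Dx K J Δx (Qinv K J α Δx Δy m'.1) + m.2 * Dx K J Δx (Qinv K J α Δx Δy m'.2) +
      Dx K J Δx (m.1 * Qinv K J α Δx Δy m'.1) + Dy K J Δy (m.1 * Qinv K J α Δx Δy m'.2),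
    m.1 * Dy K J Δy (Qinv K J α Δx Δy m'.1) + m.2 * Dy K J Δy (Qinv K J α Δx Δy m'.2) +
      Dx K J Δx (m.2 * Qinv K J α Δx Δy m'.1) + Dy K J Δy (m.2 * Qinv K J α Δx Δy m'.2))

theorem phi_eq (α Δx Δy Δt : ℝ) (a v : (ZMod K × ZMod J → ℝ) × (ZMod K × ZMod J → ℝ)) :
    Phi K J α Δx Δy Δt a v = a - (Δt / 4) • advection K J α Δx Δy (a + v) (a + v) := by
  ext p <;>
  · simp only [Phi, advection, Dx, Dy, qinv_eq_symm, map_add, Prod.fst_add, Prod.snd_add,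
      Prod.fst_sub, Prod.snd_sub, Prod.smul_mk, smul_add, Pi.sub_apply, Pi.add_apply,
      Pi.smul_apply, Pi.mul_apply, smul_eq_mul, sub_right_inj]
    ring

theorem advection_sub_advection (α Δx Δy : ℝ)
    (x y : (ZMod K × ZMod J → ℝ) × (ZMod K × ZMod J → ℝ)) :
    advection K J α Δx Δy x x - advection K J α Δx Δy y y =
      advection K J α Δx Δy (x - y) x + advection K J α Δx Δy y (x - y) := by
  ext p <;>
  · simp only [advection, Dx, Dy, qinv_eq_symm, map_sub, Prod.mk_sub_mk, Prod.mk_add_mk,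
      Prod.fst_sub, Prod.snd_sub, Pi.sub_apply, Pi.add_apply, Pi.mul_apply]
    ring

theorem phi_sub_phi (α Δx Δy Δt : ℝ) (a v w : (ZMod K × ZMod J → ℝ) × (ZMod K × ZMod J → ℝ)) :
    Phi K J α Δx Δy Δt a v - Phi K J α Δx Δy Δt a w =
      -((Δt / 4) • (advection K J α Δx Δy (v - w) (a + v) +
        advection K J α Δx Δy (a + w) (v - w))) := by
  rw [phi_eq, phi_eq, ← show (a + v) - (a + w) = v - w by abel, ← advection_sub_advection,
    smul_sub]
  abel

section Bounds
variable {D : (ZMod K × ZMod J → ℝ) → ZMod K × ZMod J → ℝ} {h : ℝ}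

theorem norm_mul_comp_qinv_le (hh : 0 < h) (hD : ∀ f, ‖toLp 2 (D f)‖ ≤ ‖toLp 2 f‖ / h)
    (α Δx Δy : ℝ) (m g : ZMod K × ZMod J → ℝ) :
    ‖toLp 2 (m * D (Qinv K J α Δx Δy g))‖ ≤ ‖toLp 2 m‖ * ‖toLp 2 g‖ / h := by
  rw [mul_div_assoc]
  refine (norm_toLp_mul_le _ _).trans ?_
  gcongr
  exact (hD _).trans (by gcongr; exact norm_qinv_le α Δx Δy g)

theorem norm_comp_mul_qinv_le (hh : 0 < h) (hD : ∀ f, ‖toLp 2 (D f)‖ ≤ ‖toLp 2 f‖ / h)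
    (α Δx Δy : ℝ) (m g : ZMod K × ZMod J → ℝ) :
    ‖toLp 2 (D (m * Qinv K J α Δx Δy g))‖ ≤ ‖toLp 2 m‖ * ‖toLp 2 g‖ / h := by
  refine (hD _).trans ?_
  gcongr
  exact (norm_toLp_mul_le _ _).trans (by gcongr; exact norm_qinv_le α Δx Δy g)

end Bounds

theorem norm_advection_fst_le (α : ℝ) {Δx Δy : ℝ} (hx : 0 < Δx) (hy : 0 < Δy)
    (u u' : (ZMod K × ZMod J → ℝ) × (ZMod K × ZMod J → ℝ)) :
    ‖toLp 2 (advection K J α Δx Δy u u').1‖ ≤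
      Δx⁻¹ * (‖toLp 2 u.1‖ * ‖toLp 2 u'.1‖ + ‖toLp 2 u.2‖ * ‖toLp 2 u'.2‖) +
        ‖toLp 2 u.1‖ * (Δx⁻¹ * ‖toLp 2 u'.1‖ + Δy⁻¹ * ‖toLp 2 u'.2‖) := by
  simp only [advection, toLp_add]
  refine norm_add₄_le.trans ?_
  calc _ ≤ ‖toLp 2 u.1‖ * ‖toLp 2 u'.1‖ / Δx + ‖toLp 2 u.2‖ * ‖toLp 2 u'.2‖ / Δx +
        ‖toLp 2 u.1‖ * ‖toLp 2 u'.1‖ / Δx + ‖toLp 2 u.1‖ * ‖toLp 2 u'.2‖ / Δy := by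
        gcongr
        · exact norm_mul_comp_qinv_le hx (norm_dx_le hx) _ _ _ _ _
        · exact norm_mul_comp_qinv_le hx (norm_dx_le hx) _ _ _ _ _
        · exact norm_comp_mul_qinv_le hx (norm_dx_le hx) _ _ _ _ _
        · exact norm_comp_mul_qinv_le hy (norm_dy_le hy) _ _ _ _ _
    _ = _ := by ring

theorem norm_advection_snd_le (α : ℝ) {Δx Δy : ℝ} (hx : 0 < Δx) (hy : 0 < Δy)
    (u u' : (ZMod K × ZMod J → ℝ) × (ZMod K × ZMod J → ℝ)) :
    ‖toLp 2 (advection K J α Δx Δy u u').2‖ ≤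
      Δy⁻¹ * (‖toLp 2 u.1‖ * ‖toLp 2 u'.1‖ + ‖toLp 2 u.2‖ * ‖toLp 2 u'.2‖) +
        ‖toLp 2 u.2‖ * (Δx⁻¹ * ‖toLp 2 u'.1‖ + Δy⁻¹ * ‖toLp 2 u'.2‖) := by
  simp only [advection, toLp_add]
  refine norm_add₄_le.trans ?_
  calc _ ≤ ‖toLp 2 u.1‖ * ‖toLp 2 u'.1‖ / Δy + ‖toLp 2 u.2‖ * ‖toLp 2 u'.2‖ / Δy +
        ‖toLp 2 u.2‖ * ‖toLp 2 u'.1‖ / Δx + ‖toLp 2 u.2‖ * ‖toLp 2 u'.2‖ / Δy := by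
        gcongr
        · exact norm_mul_comp_qinv_le hy (norm_dy_le hy) _ _ _ _ _
        · exact norm_mul_comp_qinv_le hy (norm_dy_le hy) _ _ _ _ _
        · exact norm_comp_mul_qinv_le hx (norm_dx_le hx) _ _ _ _ _
        · exact norm_comp_mul_qinv_le hy (norm_dy_le hy) _ _ _ _ _
    _ = _ := by ring

theorem norm_pairL2_advection_le (α : ℝ) {Δx Δy : ℝ} (hx : 0 < Δx) (hy : 0 < Δy)
    (u u' : (ZMod K × ZMod J → ℝ) × (ZMod K × ZMod J → ℝ)) :
    ‖pairL2 _ (advection K J α Δx Δy u u')‖ ≤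
      2 * √(Δx⁻¹ ^ 2 + Δy⁻¹ ^ 2) * ‖pairL2 _ u‖ * ‖pairL2 _ u'‖ := by
  simp only [norm_pairL2]
  exact sqrt_sq_add_sq_le_of_bilinear_bound (by positivity) (by positivity) (norm_nonneg _)
    (norm_nonneg _) (norm_nonneg _) (norm_nonneg _) (norm_nonneg _) (norm_nonneg _)
    (norm_advection_fst_le α hx hy u u') (norm_advection_snd_le α hx hy u u')

theorem pairNorm_smul_advection_le (α : ℝ) {Δx Δy : ℝ} (hx : 0 < Δx) (hy : 0 < Δy) (Δt : ℝ)
    (u u' : (ZMod K × ZMod J → ℝ) × (ZMod K × ZMod J → ℝ)) :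
    pairNorm K J Δx Δy ((Δt / 4) • advection K J α Δx Δy u u') ≤
      2 * √((Δt / (4 * Δx * √(Δx * Δy))) ^ 2 + (Δt / (4 * Δy * √(Δx * Δy))) ^ 2) *
        pairNorm K J Δx Δy u * pairNorm K J Δx Δy u' := by
  have hΔ : 0 < Δx * Δy := mul_pos hx hy
  have hh : 0 < √(Δx * Δy) := Real.sqrt_pos.2 hΔ
  have hκ : √((Δt / (4 * Δx * √(Δx * Δy))) ^ 2 + (Δt / (4 * Δy * √(Δx * Δy))) ^ 2) =
      |Δt / 4| * √(Δx⁻¹ ^ 2 + Δy⁻¹ ^ 2) / √(Δx * Δy) := by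
    rw [← Real.sqrt_sq (by positivity : 0 ≤ |Δt / 4| * √(Δx⁻¹ ^ 2 + Δy⁻¹ ^ 2) / √(Δx * Δy))]
    congr 1
    rw [div_pow (_ * _), mul_pow, sq_abs, Real.sq_sqrt (by positivity)]
    field_simp
  rw [pairNorm_eq hΔ.le, pairNorm_eq hΔ.le, pairNorm_eq hΔ.le, map_smul, norm_smul,
    Real.norm_eq_abs, hκ]
  calc √(Δx * Δy) * (|Δt / 4| * ‖pairL2 _ (advection K J α Δx Δy u u')‖)
      ≤ √(Δx * Δy) * (|Δt / 4| * (2 * √(Δx⁻¹ ^ 2 + Δy⁻¹ ^ 2) * ‖pairL2 _ u‖ * ‖pairL2 _ u'‖)) := by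
        gcongr; exact norm_pairL2_advection_le α hx hy u u'
    _ = _ := by field_simp

section Phi
variable {α Δx Δy Δt κ : ℝ}

theorem pairNorm_phi_le (hx : 0 < Δx) (hy : 0 < Δy) (hκ : 0 ≤ κ)
    (hB : ∀ u u', pairNorm K J Δx Δy ((Δt / 4) • advection K J α Δx Δy u u') ≤
      2 * κ * pairNorm K J Δx Δy u * pairNorm K J Δx Δy u')
    (a v : (ZMod K × ZMod J → ℝ) × (ZMod K × ZMod J → ℝ)) :
    pairNorm K J Δx Δy (Phi K J α Δx Δy Δt a v) ≤
      pairNorm K J Δx Δy a + 2 * κ * (pairNorm K J Δx Δy a + pairNorm K J Δx Δy v) ^ 2 := by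
  obtain ⟨e, he⟩ := exists_linearEquiv_pairNorm_eq (K := K) (J := J) hx hy
  have hav : pairNorm K J Δx Δy (a + v) ≤ pairNorm K J Δx Δy a + pairNorm K J Δx Δy v := by
    simpa only [he, map_add] using norm_add_le _ _
  rw [phi_eq]
  calc _ ≤ pairNorm K J Δx Δy a +
        pairNorm K J Δx Δy ((Δt / 4) • advection K J α Δx Δy (a + v) (a + v)) := by
        simpa only [he, map_sub] using norm_sub_le _ _
    _ ≤ pairNorm K J Δx Δy a +
        2 * κ * pairNorm K J Δx Δy (a + v) * pairNorm K J Δx Δy (a + v) := by grw [hB]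
    _ ≤ _ := by
        have := pairNorm_nonneg Δx Δy (a + v)
        rw [mul_assoc (2 * κ), ← sq]
        gcongr

theorem pairNorm_phi_sub_le (hx : 0 < Δx) (hy : 0 < Δy) (hκ : 0 ≤ κ)
    (hB : ∀ u u', pairNorm K J Δx Δy ((Δt / 4) • advection K J α Δx Δy u u') ≤
      2 * κ * pairNorm K J Δx Δy u * pairNorm K J Δx Δy u')
    (a v w : (ZMod K × ZMod J → ℝ) × (ZMod K × ZMod J → ℝ)) :
    pairNorm K J Δx Δy (Phi K J α Δx Δy Δt a v - Phi K J α Δx Δy Δt a w) ≤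
      2 * κ * (2 * pairNorm K J Δx Δy a + pairNorm K J Δx Δy v + pairNorm K J Δx Δy w) *
        pairNorm K J Δx Δy (v - w) := by
  obtain ⟨e, he⟩ := exists_linearEquiv_pairNorm_eq (K := K) (J := J) hx hy
  have hadd : ∀ x y, pairNorm K J Δx Δy (x + y) ≤ pairNorm K J Δx Δy x + pairNorm K J Δx Δy y :=
    fun x y => by simpa only [he, map_add] using norm_add_le _ _
  have := pairNorm_nonneg Δx Δy (v - w)
  rw [phi_sub_phi, smul_add]
  calc _ ≤ pairNorm K J Δx Δy ((Δt / 4) • advection K J α Δx Δy (v - w) (a + v)) +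
        pairNorm K J Δx Δy ((Δt / 4) • advection K J α Δx Δy (a + w) (v - w)) := by
        simpa only [he, map_neg, norm_neg, map_add] using norm_add_le _ _
    _ ≤ 2 * κ * pairNorm K J Δx Δy (v - w) * pairNorm K J Δx Δy (a + v) +
        2 * κ * pairNorm K J Δx Δy (a + w) * pairNorm K J Δx Δy (v - w) := by grw [hB, hB]
    _ ≤ 2 * κ * pairNorm K J Δx Δy (v - w) * (pairNorm K J Δx Δy a + pairNorm K J Δx Δy v) +
        2 * κ * (pairNorm K J Δx Δy a + pairNorm K J Δx Δy w) * pairNorm K J Δx Δy (v - w) := by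
        grw [hadd a v, hadd a w]
    _ = _ := by ring

end Phi

end Grid

theorem scheme1_growth_le_and_lipschitz_lt_one {s r : ℝ} (hs : 0 ≤ s) (hr : 0 ≤ r)
    (h : s ≤ (√5 - 2) / (200 * r ^ 2)) :
    1 + 2 * (√s * r) * (1 + √(2 + √5)) ^ 2 ≤ √(2 + √5) ∧ 4 * (√s * r) * (1 + √(2 + √5)) < 1 := by
  have h5 : √5 ^ 2 = 5 := Real.sq_sqrt (by norm_num)
  have h5l : 2.236 ≤ √5 := by nlinarith [Real.sqrt_nonneg 5]
  have h5u : √5 ≤ 2.2361 := by nlinarith [Real.sqrt_nonneg 5]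
  have hρ : √(2 + √5) ^ 2 = 2 + √5 := Real.sq_sqrt (by positivity)
  have hρl : 2.05 ≤ √(2 + √5) := by nlinarith [Real.sqrt_nonneg (2 + √5)]
  have hρu : √(2 + √5) ≤ 2.06 := by nlinarith [Real.sqrt_nonneg (2 + √5)]
  have hε2 : (√s * r) ^ 2 ≤ (√5 - 2) / 200 := by
    rw [mul_pow, Real.sq_sqrt hs]
    rcases hr.eq_or_lt with rfl | hr
    · rw [zero_pow two_ne_zero, mul_zero]; linarith
    · calc s * r ^ 2 ≤ (√5 - 2) / (200 * r ^ 2) * r ^ 2 := by gcongr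
        _ = (√5 - 2) / 200 := by field_simp
  -- `ρ ≈ 2.058` and `ε ≤ 0.0344`: both inequalities hold with room to spare.
  have hε : √s * r ≤ 0.0344 := by nlinarith [mul_nonneg (Real.sqrt_nonneg s) hr]
  constructor <;> nlinarith [mul_nonneg (Real.sqrt_nonneg s) hr]

theorem scheme1_solvability_general (K J : ℕ) [NeZero K] [NeZero J]
    (α Δx Δy Δt : ℝ) (hx : 0 < Δx) (hy : 0 < Δy)
    (a : (ZMod K × ZMod J → ℝ) × (ZMod K × ZMod J → ℝ))
    (ra ρ Cx Cy : ℝ)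
    (hra : ra = pairNorm K J Δx Δy a)
    (hρ : ρ = Real.sqrt (2 + Real.sqrt 5))
    (hCx : Cx = Δt / (4 * Δx * Real.sqrt (Δx * Δy)))
    (hCy : Cy = Δt / (4 * Δy * Real.sqrt (Δx * Δy)))
    (hsmall : Cx ^ 2 + Cy ^ 2 ≤ (Real.sqrt 5 - 2) / (200 * ra ^ 2)) :
    (∀ v, pairNorm K J Δx Δy v ≤ ρ * ra →
        pairNorm K J Δx Δy (Phi K J α Δx Δy Δt a v) ≤ ρ * ra) ∧
    (∃ L : ℝ, 0 ≤ L ∧ L < 1 ∧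
      ∀ v w, pairNorm K J Δx Δy v ≤ ρ * ra → pairNorm K J Δx Δy w ≤ ρ * ra →
        pairNorm K J Δx Δy (Phi K J α Δx Δy Δt a v - Phi K J α Δx Δy Δt a w) ≤
          L * pairNorm K J Δx Δy (v - w)) ∧
    (∃! x, pairNorm K J Δx Δy x ≤ ρ * ra ∧ Phi K J α Δx Δy Δt a x = x) := by
  have hB := pairNorm_smul_advection_le (K := K) (J := J) α hx hy Δt
  rw [← hCx, ← hCy] at hB
  set κ := √(Cx ^ 2 + Cy ^ 2)
  have hκ : 0 ≤ κ := Real.sqrt_nonneg _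
  have hr : 0 ≤ ra := hra ▸ pairNorm_nonneg Δx Δy a
  have hρ0 : 0 ≤ ρ := hρ ▸ Real.sqrt_nonneg _
  obtain ⟨hgrowth, hL⟩ := hρ ▸ scheme1_growth_le_and_lipschitz_lt_one (by positivity) hr hsmall
  have hmaps : ∀ v, pairNorm K J Δx Δy v ≤ ρ * ra →
      pairNorm K J Δx Δy (Phi K J α Δx Δy Δt a v) ≤ ρ * ra := fun v hv =>
    have := pairNorm_nonneg Δx Δy v
    calc _ ≤ ra + 2 * κ * (ra + pairNorm K J Δx Δy v) ^ 2 := hra ▸ pairNorm_phi_le hx hy hκ hB a v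
    _ ≤ ra + 2 * κ * (ra + ρ * ra) ^ 2 := by grw [hv]
    _ = (1 + 2 * (κ * ra) * (1 + ρ) ^ 2) * ra := by ring
    _ ≤ ρ * ra := by gcongr
  have hlip : ∀ v w, pairNorm K J Δx Δy v ≤ ρ * ra → pairNorm K J Δx Δy w ≤ ρ * ra →
      pairNorm K J Δx Δy (Phi K J α Δx Δy Δt a v - Phi K J α Δx Δy Δt a w) ≤
        4 * (κ * ra) * (1 + ρ) * pairNorm K J Δx Δy (v - w) := fun v w hv hw =>
    have := pairNorm_nonneg Δx Δy (v - w)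
    calc _ ≤ 2 * κ * (2 * ra + pairNorm K J Δx Δy v + pairNorm K J Δx Δy w) *
        pairNorm K J Δx Δy (v - w) := hra ▸ pairNorm_phi_sub_le hx hy hκ hB a v w
    _ ≤ 2 * κ * (2 * ra + ρ * ra + ρ * ra) * pairNorm K J Δx Δy (v - w) := by gcongr
    _ = 4 * (κ * ra) * (1 + ρ) * pairNorm K J Δx Δy (v - w) := by ring
  refine ⟨hmaps, ⟨_, by positivity, hL, hlip⟩, ?_⟩
  obtain ⟨e, he⟩ := exists_linearEquiv_pairNorm_eq (K := K) (J := J) hx hy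
  simp only [he] at hmaps hlip ⊢
  exact e.toAddEquiv.existsUnique_fixedPt (by positivity) (by positivity) hL hmaps hlip

/-- with ρ = √(2+√5), if C_x² + C_y² ≤ (√5 − 2)/(200 r_a²) where
    C_x = Δt/(4Δx√(ΔxΔy)), C_y = Δt/(4Δy√(ΔxΔy)) and r_a = ‖a‖, then Φ_a maps
    the closed ball Ω_a = {v : ‖v‖ ≤ ρ r_a} into itself and is a contraction on
    it, hence Scheme 1 has a unique solution in Ω_a. -/
theorem scheme1_solvability (K J : ℕ) [NeZero K] [NeZero J]
    (α Δx Δy Δt : ℝ) (hα : 0 < α) (hx : 0 < Δx) (hy : 0 < Δy) (ht : 0 < Δt)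
    (a : (ZMod K × ZMod J → ℝ) × (ZMod K × ZMod J → ℝ))
    (ra ρ Cx Cy : ℝ)
    (hra : ra = pairNorm K J Δx Δy a)
    (hρ : ρ = Real.sqrt (2 + Real.sqrt 5))
    (hCx : Cx = Δt / (4 * Δx * Real.sqrt (Δx * Δy)))
    (hCy : Cy = Δt / (4 * Δy * Real.sqrt (Δx * Δy)))
    (hsmall : Cx ^ 2 + Cy ^ 2 ≤ (Real.sqrt 5 - 2) / (200 * ra ^ 2)) :
    (∀ v, pairNorm K J Δx Δy v ≤ ρ * ra →
        pairNorm K J Δx Δy (Phi K J α Δx Δy Δt a v) ≤ ρ * ra) ∧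
    (∃ L : ℝ, 0 ≤ L ∧ L < 1 ∧
      ∀ v w, pairNorm K J Δx Δy v ≤ ρ * ra → pairNorm K J Δx Δy w ≤ ρ * ra →
        pairNorm K J Δx Δy (Phi K J α Δx Δy Δt a v - Phi K J α Δx Δy Δt a w) ≤
          L * pairNorm K J Δx Δy (v - w)) ∧
    (∃! x, pairNorm K J Δx Δy x ≤ ρ * ra ∧ Phi K J α Δx Δy Δt a x = x) :=
  scheme1_solvability_general K J α Δx Δy Δt hx hy a ra ρ Cx Cy hra hρ hCx hCy hsmall
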